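/- arXiv:1101.3140 — 3 statements merged into one kernel-verified Lean document; each statement's English description precedes it below -/
import Mathlib

section
/- Assume ζ = 0 and let supp 𝒟₀ denote the set of exponents α ∈ ℕⁿ such that the monomial d^α appears with a nonzero coefficient in some element of 𝒟₀. Then supp 𝒟₀ = {α ∈ ℕⁿ : x^α ∉ Q₀}; in particular, supp 𝒟₀ is finite (all its elements have degree at most the nilindex N of Q₀), and a monomial basis of R/Q₀ can be chosen among the monomials {x^α : α ∈ supp 𝒟₀}. -/
open MvPolynomial

/-- Total degree of a multi-exponent. -/
def multideg {n : ℕ} (α : Fin n →₀ ℕ) : ℕ := α.sum fun _ k => k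

/-- Normalized derivative `d^α g = (1/α!) ∂^α g` as a polynomial. -/
noncomputable def nderiv {n : ℕ} (α : Fin n →₀ ℕ) (g : MvPolynomial (Fin n) ℝ) :
    MvPolynomial (Fin n) ℝ :=
  ∑ γ ∈ g.support,
    monomial (γ - α) (((∏ i, (γ i).choose (α i) : ℕ) : ℝ) * coeff γ g)

/-- `Λ(∂_x)[g]`: apply the differential operator with coefficients `Λ`
(in the normalized basis `d^α`), keeping a polynomial result. -/
noncomputable def applyPoly {n : ℕ} (Λ : (Fin n →₀ ℕ) →₀ ℝ)
    (g : MvPolynomial (Fin n) ℝ) : MvPolynomial (Fin n) ℝ :=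
  Λ.sum fun α c => c • nderiv α g

/-- `Λ ↦ Λ^ζ[g]`, as a linear map in `Λ`. -/
noncomputable def applyAtL {n : ℕ} (ζ : Fin n → ℝ) (g : MvPolynomial (Fin n) ℝ) :
    ((Fin n →₀ ℕ) →₀ ℝ) →ₗ[ℝ] ℝ :=
  Finsupp.linearCombination ℝ (fun α => eval ζ (nderiv α g))

/-- `Λ^ζ[g]`. -/
noncomputable def applyAt {n : ℕ} (ζ : Fin n → ℝ) (Λ : (Fin n →₀ ℕ) →₀ ℝ)
    (g : MvPolynomial (Fin n) ℝ) : ℝ := applyAtL ζ g Λ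

/-- The orthogonal (dual space) of an ideal at ζ. -/
noncomputable def dualSpace {n : ℕ} (ζ : Fin n → ℝ)
    (Q : Ideal (MvPolynomial (Fin n) ℝ)) : Submodule ℝ ((Fin n →₀ ℕ) →₀ ℝ) :=
  ⨅ p ∈ Q, LinearMap.ker (applyAtL ζ p)

/-- The maximal ideal at ζ. -/
noncomputable def maxIdealAt {n : ℕ} (ζ : Fin n → ℝ) : Ideal (MvPolynomial (Fin n) ℝ) :=
  Ideal.span (Set.range fun i => X i - C (ζ i))

/-- `Q` is the primary component of `I` at an isolated root `ζ`. -/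
def IsPrimaryComponentAt {n : ℕ} (ζ : Fin n → ℝ)
    (I Q : Ideal (MvPolynomial (Fin n) ℝ)) : Prop :=
  Q.IsPrimary ∧ Q.radical = maxIdealAt ζ ∧
    ∃ S : Finset (Ideal (MvPolynomial (Fin n) ℝ)),
      (∀ P ∈ S, P.IsPrimary ∧ ¬ P.radical ≤ maxIdealAt ζ) ∧ I = S.inf id ⊓ Q

/-- Elements of the dual space of degree at most `t`. -/
noncomputable def dualSpaceLE {n : ℕ} (ζ : Fin n → ℝ)
    (Q : Ideal (MvPolynomial (Fin n) ℝ)) (t : ℕ) :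
    Submodule ℝ ((Fin n →₀ ℕ) →₀ ℝ) :=
  dualSpace ζ Q ⊓ Finsupp.supported ℝ ℝ {α | multideg α ≤ t}

/-- The derivation `∂/∂∂_i` in the normalized coordinates: shift of coefficients. -/
noncomputable def dshift {n : ℕ} (i : Fin n) (Λ : (Fin n →₀ ℕ) →₀ ℝ) :
    (Fin n →₀ ℕ) →₀ ℝ :=
  Finsupp.comapDomain (fun β => β + Finsupp.single i 1) Λ
    (fun _ _ _ _ h => add_right_cancel h)

/-- Truncation: set `∂_j = 0` for `j > k`. -/
noncomputable def trunck {n : ℕ} (k : Fin n) (Λ : (Fin n →₀ ℕ) →₀ ℝ) :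
    (Fin n →₀ ℕ) →₀ ℝ :=
  Λ.filter (fun α => ∀ j, k < j → α j = 0)

/-- Integration with respect to `∂_k` in the normalized coordinates. -/
noncomputable def intk {n : ℕ} (k : Fin n) (Λ : (Fin n →₀ ℕ) →₀ ℝ) :
    (Fin n →₀ ℕ) →₀ ℝ :=
  Finsupp.mapDomain (fun α => α + Finsupp.single k 1) Λ

/-- `supp 𝒟₀`: the set of exponents `α` such that `d^α` appears with a nonzero
coefficient in some element of the dual space at `0`. -/
def dsupp {n : ℕ} (Q : Ideal (MvPolynomial (Fin n) ℝ)) : Set (Fin n →₀ ℕ) :=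
  {α | ∃ Λ ∈ dualSpace (0 : Fin n → ℝ) Q, Λ α ≠ 0}

/-! At `ζ = 0` the operator `d^α` pairs with the monomial `x^β` as the Kronecker delta, so a
coefficient `Λ_α ≠ 0` of some `Λ ∈ 𝒟₀` forces `x^α ∉ Q₀`. Conversely, `m₀^(N+1) ⊆ Q₀` leaves only
finitely many monomials outside `Q₀`, so every linear functional on `R/Q₀` is represented by a
finitely supported `Λ ∈ 𝒟₀`; one that does not vanish on `x^α` puts `α` in the support. The
monomials outside `Q₀` span `R/Q₀`, and this finite spanning family contains a basis. -/

lemma span_mk_monomial_notMem_eq_top {σ R : Type*} [CommRing R]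
    (Q : Ideal (MvPolynomial σ R)) :
    Submodule.span R ((fun α => Ideal.Quotient.mk Q (monomial α (1 : R))) ''
      {α | monomial α (1 : R) ∉ Q}) = ⊤ := by
  rw [eq_top_iff]
  rintro x -
  obtain ⟨p, rfl⟩ := Ideal.Quotient.mk_surjective x
  induction p using MvPolynomial.induction_on' with
  | monomial α c =>
    have hmk : Ideal.Quotient.mk Q (monomial α c) = c • Ideal.Quotient.mk Q (monomial α 1) := by
      rw [← Ideal.Quotient.mkₐ_eq_mk R, ← map_smul, smul_monomial, smul_eq_mul, mul_one]
    rw [hmk]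
    by_cases hαQ : monomial α (1 : R) ∈ Q
    · simp [Ideal.Quotient.eq_zero_iff_mem.2 hαQ]
    · exact Submodule.smul_mem _ _ (Submodule.subset_span ⟨α, hαQ, rfl⟩)
  | add p q hp hq => rw [map_add]; exact add_mem hp hq

lemma exists_finset_linearIndepOn_span_image_eq {ι K V : Type*} [DivisionRing K]
    [AddCommGroup V] [Module K V] {v : ι → V} {t : Set ι} (ht : t.Finite) :
    ∃ B : Finset ι, ↑B ⊆ t ∧ LinearIndepOn K v ↑B ∧
      Submodule.span K (v '' ↑B) = Submodule.span K (v '' t) := by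
  obtain ⟨b, hbt, -, htb, hli⟩ :=
    exists_linearIndepOn_extension (linearIndepOn_empty K v) (Set.empty_subset t)
  refine ⟨(ht.subset hbt).toFinset, by simpa, by simpa, ?_⟩
  rw [Set.Finite.coe_toFinset]
  exact le_antisymm (Submodule.span_mono (Set.image_mono hbt)) (Submodule.span_le.2 htb)

section

variable {n : ℕ}

lemma multideg_eq_degree (α : Fin n →₀ ℕ) : multideg α = α.degree := rfl

lemma maxIdealAt_zero : maxIdealAt (0 : Fin n → ℝ) = idealOfVars (Fin n) ℝ := by
  simp [maxIdealAt, idealOfVars]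

lemma multideg_le_of_monomial_notMem {Q : Ideal (MvPolynomial (Fin n) ℝ)} {N : ℕ}
    (hN : maxIdealAt (0 : Fin n → ℝ) ^ (N + 1) ≤ Q) {α : Fin n →₀ ℕ}
    (hα : monomial α (1 : ℝ) ∉ Q) : multideg α ≤ N := by
  by_contra h
  refine hα (hN ?_)
  rw [maxIdealAt_zero, monomial_mem_pow_idealOfVars_iff _ _ one_ne_zero, ← multideg_eq_degree]
  omega

lemma finite_setOf_monomial_notMem {Q : Ideal (MvPolynomial (Fin n) ℝ)} {N : ℕ}
    (hN : maxIdealAt (0 : Fin n → ℝ) ^ (N + 1) ≤ Q) :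
    {α : Fin n →₀ ℕ | monomial α (1 : ℝ) ∉ Q}.Finite :=
  (Finsupp.finite_of_degree_le N).subset fun _ hα => multideg_le_of_monomial_notMem hN hα

lemma prod_choose_eq_zero_of_le_of_ne {γ α : Fin n →₀ ℕ} (hle : γ ≤ α) (hne : γ ≠ α) :
    ∏ i, (γ i).choose (α i) = 0 := by
  obtain ⟨i, hi⟩ : ∃ i, γ i < α i := by
    contrapose! hne
    exact le_antisymm hle fun i => hne i
  exact Finset.prod_eq_zero (Finset.mem_univ i) (Nat.choose_eq_zero_of_lt hi)

lemma eval_zero_nderiv (α : Fin n →₀ ℕ) (g : MvPolynomial (Fin n) ℝ) :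
    eval (0 : Fin n → ℝ) (nderiv α g) = coeff α g := by
  simp only [nderiv, eval_zero, map_sum, constantCoeff_monomial]
  rw [Finset.sum_eq_single α]
  · simp
  · intro γ _ hγ
    split_ifs with h
    · simp [prod_choose_eq_zero_of_le_of_ne (tsub_eq_zero_iff_le.1 h) hγ]
    · rfl
  · intro hα
    simp [notMem_support_iff.1 hα]

lemma applyAtL_zero (g : MvPolynomial (Fin n) ℝ) :
    applyAtL (0 : Fin n → ℝ) g = Finsupp.linearCombination ℝ (fun α => coeff α g) := by
  simp only [applyAtL, eval_zero_nderiv]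

lemma applyAtL_zero_monomial (α : Fin n →₀ ℕ) (c : ℝ) (Λ : (Fin n →₀ ℕ) →₀ ℝ) :
    applyAtL (0 : Fin n → ℝ) (monomial α c) Λ = c * Λ α := by
  rw [applyAtL_zero, Finsupp.linearCombination_apply, Finsupp.sum_eq_single α]
  · simp [mul_comm]
  · intro β _ hβ
    simp [coeff_monomial, Ne.symm hβ]
  · simp

lemma applyAtL_zero_add (p q : MvPolynomial (Fin n) ℝ) (Λ : (Fin n →₀ ℕ) →₀ ℝ) :
    applyAtL (0 : Fin n → ℝ) (p + q) Λ =
      applyAtL (0 : Fin n → ℝ) p Λ + applyAtL (0 : Fin n → ℝ) q Λ := by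
  simp [applyAtL_zero, Finsupp.linearCombination_apply, mul_add, Finsupp.sum_add]

lemma exists_applyAtL_zero_eq (G : MvPolynomial (Fin n) ℝ →ₗ[ℝ] ℝ)
    (hG : (Function.support fun α => G (monomial α 1)).Finite) :
    ∃ Λ : (Fin n →₀ ℕ) →₀ ℝ, ∀ p, applyAtL (0 : Fin n → ℝ) p Λ = G p := by
  refine ⟨Finsupp.ofSupportFinite (fun α => G (monomial α 1)) hG, fun p => ?_⟩
  induction p using MvPolynomial.induction_on' with
  | monomial α c =>
    rw [applyAtL_zero_monomial, Finsupp.ofSupportFinite_coe, ← smul_eq_mul, ← map_smul,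
      smul_monomial, smul_eq_mul, mul_one]
  | add p q hp hq => rw [applyAtL_zero_add, hp, hq, map_add]

lemma mem_dualSpace_iff {ζ : Fin n → ℝ} {Q : Ideal (MvPolynomial (Fin n) ℝ)}
    {Λ : (Fin n →₀ ℕ) →₀ ℝ} :
    Λ ∈ dualSpace ζ Q ↔ ∀ p ∈ Q, applyAtL ζ p Λ = 0 := by
  simp [dualSpace, Submodule.mem_iInf, LinearMap.mem_ker]

lemma dsupp_eq_of_finite {Q : Ideal (MvPolynomial (Fin n) ℝ)}
    (hfin : {α : Fin n →₀ ℕ | monomial α (1 : ℝ) ∉ Q}.Finite) :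
    dsupp Q = {α | monomial α (1 : ℝ) ∉ Q} := by
  ext α
  constructor
  · rintro ⟨Λ, hΛ, hα⟩ hαQ
    rw [← one_mul (Λ α), ← applyAtL_zero_monomial] at hα
    exact hα (mem_dualSpace_iff.1 hΛ _ hαQ)
  · intro hα
    obtain ⟨φ, hφ⟩ := Module.Projective.exists_dual_ne_zero ℝ
      (x := Ideal.Quotient.mk Q (monomial α (1 : ℝ)))
      (by rwa [Ne, Ideal.Quotient.eq_zero_iff_mem])
    let G := φ ∘ₗ (Ideal.Quotient.mkₐ ℝ Q).toLinearMap
    have hGQ : ∀ p ∈ Q, G p = 0 := fun p hp => by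
      simp [G, Ideal.Quotient.eq_zero_iff_mem.2 hp]
    obtain ⟨Λ, hΛ⟩ := exists_applyAtL_zero_eq G
      (hfin.subset fun β hβ hβQ => hβ (hGQ _ hβQ))
    refine ⟨Λ, mem_dualSpace_iff.2 fun p hp => (hΛ p).trans (hGQ p hp), ?_⟩
    rw [← one_mul (Λ α), ← applyAtL_zero_monomial, hΛ]
    exact hφ

end

theorem stmt3_general {n : ℕ}
    (Q : Ideal (MvPolynomial (Fin n) ℝ))
    (N : ℕ)
    (hN' : (maxIdealAt (0 : Fin n → ℝ)) ^ (N + 1) ≤ Q) :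
    dsupp Q = {α | MvPolynomial.monomial α (1 : ℝ) ∉ Q} ∧
    (∀ α ∈ dsupp Q, multideg α ≤ N) ∧
    (dsupp Q).Finite ∧
    (∃ B : Finset (Fin n →₀ ℕ), ↑B ⊆ dsupp Q ∧
      LinearIndependent ℝ (fun β : B =>
        Ideal.Quotient.mk Q (MvPolynomial.monomial (β : Fin n →₀ ℕ) (1 : ℝ))) ∧
      Submodule.span ℝ (Set.range fun β : B =>
        Ideal.Quotient.mk Q (MvPolynomial.monomial (β : Fin n →₀ ℕ) (1 : ℝ))) = ⊤) := by
  have hfin := finite_setOf_monomial_notMem hN'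
  have hdsupp := dsupp_eq_of_finite hfin
  obtain ⟨B, hBsub, hBli, hBspan⟩ := exists_finset_linearIndepOn_span_image_eq (K := ℝ)
    (v := fun α => Ideal.Quotient.mk Q (monomial α (1 : ℝ))) hfin
  rw [hdsupp]
  refine ⟨rfl, fun α hα => multideg_le_of_monomial_notMem hN' hα, hfin, B, hBsub, hBli, ?_⟩
  rw [← span_mk_monomial_notMem_eq_top, ← hBspan, Set.image_eq_range]
  rfl

/-- for `ζ = 0`, `supp 𝒟₀ = {α : x^α ∉ Q₀}`; all its elements have
degree at most the nilindex `N` of `Q₀` (in particular it is finite), and a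
monomial basis of `R/Q₀` can be chosen among the monomials `x^α, α ∈ supp 𝒟₀`. -/
theorem stmt3 {n s : ℕ} (f : Fin s → MvPolynomial (Fin n) ℝ)
    (Q : Ideal (MvPolynomial (Fin n) ℝ))
    (hQ : IsPrimaryComponentAt (0 : Fin n → ℝ) (Ideal.span (Set.range f)) Q)
    (N : ℕ) (hN : ¬ (maxIdealAt (0 : Fin n → ℝ)) ^ N ≤ Q)
    (hN' : (maxIdealAt (0 : Fin n → ℝ)) ^ (N + 1) ≤ Q) :
    dsupp Q = {α | MvPolynomial.monomial α (1 : ℝ) ∉ Q} ∧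
    (∀ α ∈ dsupp Q, multideg α ≤ N) ∧
    (dsupp Q).Finite ∧
    (∃ B : Finset (Fin n →₀ ℕ), ↑B ⊆ dsupp Q ∧
      LinearIndependent ℝ (fun β : B =>
        Ideal.Quotient.mk Q (MvPolynomial.monomial (β : Fin n →₀ ℕ) (1 : ℝ))) ∧
      Submodule.span ℝ (Set.range fun β : B =>
        Ideal.Quotient.mk Q (MvPolynomial.monomial (β : Fin n →₀ ℕ) (1 : ℝ))) = ⊤) :=
  stmt3_general Q N hN'
end

section
/- (Deflation Theorem 1.) Let f(x) be an n-variate polynomial system with a μ-fold isolated zero at x = ζ, let 𝒟 = (Λ₁,…,Λ_μ) be a basis of 𝒟_ζ, and let 𝒟f(x) = (Λ_i(∂_x)[f_k])_{i,k}. Then there exists a set I = {(i₁,k₁),…,(iₙ,kₙ)} of n index pairs such that the corresponding n rows of the Jacobian J_{𝒟f}(ζ) are linearly independent, and for any such I the square n × n system 𝒟f^I(x) = (Λ_{i_j}(∂_x)[f_{k_j}])_{j=1,…,n} = 0 has a simple root at x = ζ: it vanishes at ζ and its n × n Jacobian at ζ is nonsingular. -/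
open MvPolynomial

/-- Row `(i,k)` of the Jacobian of the system `𝒟f = (Λ_i(∂_x)[f_k])_{i,k}`
at the point `ζ`. -/
noncomputable def jacRow {n s μ : ℕ} (Λs : Fin μ → ((Fin n →₀ ℕ) →₀ ℝ))
    (f : Fin s → MvPolynomial (Fin n) ℝ) (ζ : Fin n → ℝ)
    (ik : Fin μ × Fin s) (j : Fin n) : ℝ :=
  MvPolynomial.eval ζ (MvPolynomial.pderiv j (applyPoly (Λs ik.1) (f ik.2)))

/-!
Suppose the rows of `J_{𝒟f}(ζ)` do not span `ℝⁿ`, and pick `u ≠ 0` orthogonal to all of them.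
Row `(i, k)` paired with `u` is `(∂_u Λ_i)^ζ[f_k]`, so composing with `∂_u = ∑ u_l ∂_l` sends
`𝒟_ζ` to functionals killing every `f_k`. The space `𝒟_ζ` is closed under the shifts
`Λ ↦ ∂Λ/∂(∂_j)`, and `shift_j ∘ ∂_u = ∂_u ∘ shift_j + u_j`; so by induction on the order, if all
shifts of `∂_u Λ` lie in `𝒟_ζ`, then `∂_u Λ` is `ζ`-linear on `R·Q_ζ`, kills `I`, and hence
kills `Q_ζ` (multiply by some `h ∈ ⋂ P`, `h(ζ) ≠ 0`, over the other primary components `P`).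
Thus `∂_u` maps `𝒟_ζ` into itself, and `∂_u^k δ_ζ ∈ 𝒟_ζ` has order exactly `k` for every `k`,
which is impossible for the span of finitely many operators. The rest is immediate:
`Λ_i^ζ[f_k] = 0` since `f_k ∈ Q_ζ`, and independent rows give a nonzero determinant.
-/

namespace Deflation

variable {n : ℕ}

open Finsupp (single)

theorem coeff_nderiv (α β : Fin n →₀ ℕ) (g : MvPolynomial (Fin n) ℝ) :
    coeff β (nderiv α g) = ((∏ i, ((β + α) i).choose (α i) : ℕ) : ℝ) * coeff (β + α) g := by
  classical
  rw [nderiv, coeff_sum]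
  simp only [coeff_monomial]
  rw [Finset.sum_eq_single (β + α)]
  · simp only [add_tsub_cancel_right, if_true]
  · intro γ _ hne
    split_ifs with h
    · have hlt : ∃ i, γ i < α i := by
        by_contra! hge
        refine hne (Finsupp.ext fun i => ?_)
        have h' := congrArg (· i) h
        simp only [Finsupp.tsub_apply] at h'
        simp only [Finsupp.add_apply]
        have := hge i
        omega
      obtain ⟨i, hi⟩ := hlt
      rw [Finset.prod_eq_zero (Finset.mem_univ i) (Nat.choose_eq_zero_of_lt hi)]
      simp
    · rfl
  · intro h
    simp [notMem_support_iff.mp h]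

theorem nderiv_zero_left (g : MvPolynomial (Fin n) ℝ) : nderiv 0 g = g := by
  ext β; simp [coeff_nderiv]

noncomputable def nderivₗ (α : Fin n →₀ ℕ) :
    MvPolynomial (Fin n) ℝ →ₗ[ℝ] MvPolynomial (Fin n) ℝ where
  toFun := nderiv α
  map_add' g h := by ext β; simp [coeff_nderiv, mul_add]
  map_smul' c g := by ext β; simp [coeff_nderiv]; ring

theorem nderivₗ_apply (α : Fin n →₀ ℕ) (g : MvPolynomial (Fin n) ℝ) :
    nderivₗ α g = nderiv α g := rfl

theorem prod_choose_eq_mul_prod_compl (l : Fin n) {γ α γ' α' : Fin n →₀ ℕ}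
    (hγ : ∀ i ≠ l, γ i = γ' i) (hα : ∀ i ≠ l, α i = α' i) :
    ∏ i, (γ i).choose (α i) = (γ l).choose (α l) * ∏ i ∈ {l}ᶜ, (γ' i).choose (α' i) := by
  classical
  rw [Fintype.prod_eq_mul_prod_compl l]
  refine congrArg _ (Finset.prod_congr rfl fun i hi => ?_)
  have hil : i ≠ l := by simpa using hi
  rw [hγ i hil, hα i hil]

theorem prod_choose_add_single_mul (l : Fin n) (γ α : Fin n →₀ ℕ) :
    (∏ i, (γ i).choose ((α + single l 1 : Fin n →₀ ℕ) i)) * (α l + 1)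
      = (∏ i, (γ i).choose (α i)) * (γ l - α l) := by
  have hα : ∀ i ≠ l, (α + single l 1 : Fin n →₀ ℕ) i = α i := fun i hi => by
    simp [Finsupp.single_eq_of_ne hi]
  rw [prod_choose_eq_mul_prod_compl l (fun _ _ => rfl) hα,
    prod_choose_eq_mul_prod_compl l (fun _ _ => rfl) fun _ _ => rfl]
  simp only [Finsupp.add_apply, Finsupp.single_eq_same]
  rw [mul_right_comm, Nat.choose_succ_right_eq, mul_right_comm]

theorem prod_choose_pascal (l : Fin n) {γ : Fin n →₀ ℕ} (hγ : γ l ≠ 0) (α : Fin n →₀ ℕ) :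
    ∏ i, (γ i).choose (α i) = ∏ i, ((γ - single l 1 : Fin n →₀ ℕ) i).choose (α i)
      + if α l = 0 then 0
        else ∏ i, ((γ - single l 1 : Fin n →₀ ℕ) i).choose ((α - single l 1 : Fin n →₀ ℕ) i) := by
  have hoff : ∀ β : Fin n →₀ ℕ, ∀ i ≠ l, (β - single l 1 : Fin n →₀ ℕ) i = β i := fun β i hi => by
    simp [Finsupp.single_eq_of_ne hi]
  obtain ⟨g, hg⟩ := Nat.exists_eq_succ_of_ne_zero hγ
  rw [prod_choose_eq_mul_prod_compl l (fun _ _ => rfl) fun _ _ => rfl,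
    prod_choose_eq_mul_prod_compl l (hoff γ) fun _ _ => rfl]
  split_ifs with hα
  · simp [hα, hg]
  · obtain ⟨a, ha⟩ := Nat.exists_eq_succ_of_ne_zero hα
    rw [prod_choose_eq_mul_prod_compl l (hoff γ) (hoff α)]
    simp [hg, ha, Nat.choose_succ_succ', add_mul, add_comm]

theorem pderiv_nderiv (l : Fin n) (α : Fin n →₀ ℕ) (g : MvPolynomial (Fin n) ℝ) :
    pderiv l (nderiv α g) = ((α l + 1 : ℕ) : ℝ) • nderiv (α + single l 1) g := by
  ext β
  rw [coeff_pderiv, coeff_smul, coeff_nderiv, coeff_nderiv, smul_eq_mul,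
    show β + single l 1 + α = β + (α + single l 1) by abel]
  have key := prod_choose_add_single_mul l (β + (α + single l 1)) α
  rw [show (β + (α + single l 1) : Fin n →₀ ℕ) l - α l = β l + 1 by simp; omega] at key
  have key' := congrArg (Nat.cast : ℕ → ℝ) key
  push_cast at key' ⊢
  linear_combination (-coeff (β + (α + single l 1)) g) * key'

theorem nderiv_X_mul (l : Fin n) (α : Fin n →₀ ℕ) (g : MvPolynomial (Fin n) ℝ) :
    nderiv α (X l * g)
      = X l * nderiv α g + if α l = 0 then 0 else nderiv (α - single l 1) g := by
  classical
  ext β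
  have hsub : ∀ {δ : Fin n →₀ ℕ}, δ l ≠ 0 → ∀ ε, δ - single l 1 + ε = δ + ε - single l 1 :=
    fun hδ _ => tsub_add_eq_add_tsub (Finsupp.single_le_iff.mpr (Nat.one_le_iff_ne_zero.mpr hδ))
  have hγ : (β + α) l = β l + α l := rfl
  simp only [coeff_add, coeff_nderiv, coeff_X_mul', Finsupp.mem_support_iff,
    apply_ite (coeff β), coeff_zero]
  by_cases hβ : β l = 0 <;> by_cases hα : α l = 0
  · simp [hβ, hα]
  · have hlow : ∏ i, ((β + α - single l 1 : Fin n →₀ ℕ) i).choose (α i) = 0 :=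
      Finset.prod_eq_zero (Finset.mem_univ l) (Nat.choose_eq_zero_of_lt (by simp [hβ]; omega))
    rw [prod_choose_pascal l (by omega) α, hlow, add_comm β (α - _), hsub hα, add_comm α]
    simp [hβ, hα]
  · rw [prod_choose_pascal l (by omega) α, hsub hβ]
    simp [hβ, hα]
  · rw [prod_choose_pascal l (by omega) α, hsub hβ, add_comm β (α - _), hsub hα, add_comm α]
    simp [hβ, hα, add_mul]

theorem eval_nderiv_X_sub_C_mul (ζ : Fin n → ℝ) (l : Fin n) (α : Fin n →₀ ℕ)
    (g : MvPolynomial (Fin n) ℝ) :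
    eval ζ (nderiv α ((X l - C (ζ l)) * g))
      = if α l = 0 then 0 else eval ζ (nderiv (α - single l 1) g) := by
  rw [sub_mul, ← smul_eq_C_mul, ← nderivₗ_apply, map_sub, map_smul, nderivₗ_apply,
    nderivₗ_apply, nderiv_X_mul]
  split_ifs <;> simp

theorem applyAt_eq_sum (ζ : Fin n → ℝ) (Λ : (Fin n →₀ ℕ) →₀ ℝ) (g : MvPolynomial (Fin n) ℝ) :
    applyAt ζ Λ g = Λ.sum fun α c => c * eval ζ (nderiv α g) :=
  Finsupp.linearCombination_apply ℝ Λ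

theorem applyAt_single (ζ : Fin n → ℝ) (α : Fin n →₀ ℕ) (c : ℝ) (g : MvPolynomial (Fin n) ℝ) :
    applyAt ζ (single α c) g = c * eval ζ (nderiv α g) :=
  Finsupp.linearCombination_single ℝ c α

theorem applyAt_add_left (ζ : Fin n → ℝ) (Λ Λ' : (Fin n →₀ ℕ) →₀ ℝ)
    (g : MvPolynomial (Fin n) ℝ) :
    applyAt ζ (Λ + Λ') g = applyAt ζ Λ g + applyAt ζ Λ' g :=
  map_add (applyAtL ζ g) Λ Λ'

theorem applyAt_add_right (ζ : Fin n → ℝ) (Λ : (Fin n →₀ ℕ) →₀ ℝ)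
    (g h : MvPolynomial (Fin n) ℝ) :
    applyAt ζ Λ (g + h) = applyAt ζ Λ g + applyAt ζ Λ h := by
  simp only [applyAt_eq_sum, ← nderivₗ_apply, map_add, mul_add, Finsupp.sum_add]

theorem applyAt_C_mul (ζ : Fin n → ℝ) (Λ : (Fin n →₀ ℕ) →₀ ℝ) (a : ℝ)
    (g : MvPolynomial (Fin n) ℝ) :
    applyAt ζ Λ (C a * g) = a * applyAt ζ Λ g := by
  simp only [applyAt_eq_sum, ← smul_eq_C_mul, ← nderivₗ_apply, map_smul, Finsupp.mul_sum]
  refine Finsupp.sum_congr fun α _ => ?_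
  rw [nderivₗ_apply, smul_eq_C_mul, map_mul, eval_C]
  ring

theorem applyAt_zero_right (ζ : Fin n → ℝ) (Λ : (Fin n →₀ ℕ) →₀ ℝ) :
    applyAt ζ Λ 0 = 0 := by
  simpa using applyAt_C_mul ζ Λ 0 0

theorem applyPoly_add (Λ Λ' : (Fin n →₀ ℕ) →₀ ℝ) (g : MvPolynomial (Fin n) ℝ) :
    applyPoly (Λ + Λ') g = applyPoly Λ g + applyPoly Λ' g :=
  Finsupp.sum_add_index' (fun _ => zero_smul ℝ _) fun _ _ _ => add_smul _ _ _

theorem applyPoly_single (α : Fin n →₀ ℕ) (c : ℝ) (g : MvPolynomial (Fin n) ℝ) :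
    applyPoly (single α c) g = c • nderiv α g :=
  Finsupp.sum_single_index (zero_smul ℝ _)

theorem eval_applyPoly (ζ : Fin n → ℝ) (Λ : (Fin n →₀ ℕ) →₀ ℝ) (g : MvPolynomial (Fin n) ℝ) :
    eval ζ (applyPoly Λ g) = applyAt ζ Λ g := by
  induction Λ using Finsupp.induction_linear with
  | zero => simp [applyPoly, applyAt]
  | add Λ Λ' h h' => rw [applyPoly_add, map_add, h, h', applyAt_add_left]
  | single α c => rw [applyPoly_single, applyAt_single, smul_eq_C_mul, map_mul, eval_C]

/-- `Λ ↦ ∂_l ∘ Λ` in the normalized basis, where `∂_l d^α = (α_l + 1) d^(α + e_l)`. -/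
noncomputable def compPDeriv (l : Fin n) :
    ((Fin n →₀ ℕ) →₀ ℝ) →ₗ[ℝ] ((Fin n →₀ ℕ) →₀ ℝ) :=
  Finsupp.linearCombination ℝ fun α => single (α + single l 1) ((α l + 1 : ℕ) : ℝ)

theorem compPDeriv_single (l : Fin n) (α : Fin n →₀ ℕ) (c : ℝ) :
    compPDeriv l (single α c) = single (α + single l 1) (c * ((α l + 1 : ℕ) : ℝ)) := by
  rw [compPDeriv, Finsupp.linearCombination_single, Finsupp.smul_single, smul_eq_mul]

theorem sub_single_add_single {γ : Fin n →₀ ℕ} {l : Fin n} (h : γ l ≠ 0) :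
    γ - single l 1 + single l 1 = γ :=
  tsub_add_cancel_of_le (Finsupp.single_le_iff.mpr (Nat.one_le_iff_ne_zero.mpr h))

theorem compPDeriv_apply (l : Fin n) (Λ : (Fin n →₀ ℕ) →₀ ℝ) (γ : Fin n →₀ ℕ) :
    compPDeriv l Λ γ = γ l * Λ (γ - single l 1) := by
  induction Λ using Finsupp.induction_linear with
  | zero => simp
  | add Λ Λ' h h' => simp [h, h', mul_add]
  | single α c =>
    rw [compPDeriv_single, Finsupp.single_apply, Finsupp.single_apply]
    by_cases hγ : γ l = 0
    · have : α + single l 1 ≠ γ := fun h => by simp [← h] at hγ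
      simp [this, hγ]
    · by_cases hα : α = γ - single l 1
      · subst hα
        simp [sub_single_add_single hγ, mul_comm, Nat.sub_add_cancel (Nat.one_le_iff_ne_zero.mpr hγ)]
      · have : α + single l 1 ≠ γ := fun h => hα (by rw [← h, add_tsub_cancel_right])
        rw [if_neg this, if_neg hα, mul_zero]

theorem dshift_apply (l : Fin n) (Λ : (Fin n →₀ ℕ) →₀ ℝ) (β : Fin n →₀ ℕ) :
    dshift l Λ β = Λ (β + single l 1) := rfl

theorem dshift_single (l : Fin n) (α : Fin n →₀ ℕ) (c : ℝ) :
    dshift l (single α c) = if α l = 0 then 0 else single (α - single l 1) c := by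
  ext β
  rw [dshift_apply, Finsupp.single_apply]
  split_ifs with h hα hα
  · simp [h] at hα
  · rw [h, add_tsub_cancel_right, Finsupp.single_eq_same]
  · simp
  · rw [Finsupp.single_eq_of_ne]
    rintro rfl
    exact h (sub_single_add_single hα).symm

theorem dshift_zero (l : Fin n) : dshift l (0 : (Fin n →₀ ℕ) →₀ ℝ) = 0 := by
  ext β; rfl

theorem dshift_add (l : Fin n) (Λ Λ' : (Fin n →₀ ℕ) →₀ ℝ) :
    dshift l (Λ + Λ') = dshift l Λ + dshift l Λ' := by
  ext β; simp [dshift_apply]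

theorem eval_pderiv_applyPoly (ζ : Fin n → ℝ) (l : Fin n) (Λ : (Fin n →₀ ℕ) →₀ ℝ)
    (g : MvPolynomial (Fin n) ℝ) :
    eval ζ (pderiv l (applyPoly Λ g)) = applyAt ζ (compPDeriv l Λ) g := by
  induction Λ using Finsupp.induction_linear with
  | zero => simp [applyPoly, applyAt]
  | add Λ Λ' h h' => rw [applyPoly_add, map_add, map_add, h, h', map_add, applyAt_add_left]
  | single α c =>
    rw [applyPoly_single, compPDeriv_single, applyAt_single, Derivation.map_smul, pderiv_nderiv,
      smul_smul,
      smul_eq_C_mul, map_mul, eval_C]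

theorem applyAt_X_sub_C_mul (ζ : Fin n → ℝ) (l : Fin n) (Λ : (Fin n →₀ ℕ) →₀ ℝ)
    (g : MvPolynomial (Fin n) ℝ) :
    applyAt ζ Λ ((X l - C (ζ l)) * g) = applyAt ζ (dshift l Λ) g := by
  induction Λ using Finsupp.induction_linear with
  | zero => simp [applyAt, dshift_zero]
  | add Λ Λ' h h' => rw [applyAt_add_left, h, h', dshift_add, applyAt_add_left]
  | single α c =>
    rw [applyAt_single, eval_nderiv_X_sub_C_mul, dshift_single]
    split_ifs
    · simp [applyAt]
    · rw [applyAt_single]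

theorem dshift_compPDeriv (j l : Fin n) (Λ : (Fin n →₀ ℕ) →₀ ℝ) :
    dshift j (compPDeriv l Λ) = compPDeriv l (dshift j Λ) + if j = l then Λ else 0 := by
  ext β
  rw [dshift_apply, Finsupp.add_apply, compPDeriv_apply, compPDeriv_apply, dshift_apply]
  by_cases hβ : β l = 0
  · split_ifs with hjl
    · subst hjl
      simp [hβ]
    · simp [hβ, hjl]
  · rw [← tsub_add_eq_add_tsub (Finsupp.single_le_iff.mpr (Nat.one_le_iff_ne_zero.mpr hβ))]
    split_ifs with hjl
    · subst hjl
      simp [sub_single_add_single hβ]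
      ring
    · simp [hjl]

noncomputable def compDirDeriv (u : Fin n → ℝ) :
    ((Fin n →₀ ℕ) →₀ ℝ) →ₗ[ℝ] ((Fin n →₀ ℕ) →₀ ℝ) :=
  ∑ l, u l • compPDeriv l

theorem compDirDeriv_eq_sum (u : Fin n → ℝ) (Λ : (Fin n →₀ ℕ) →₀ ℝ) :
    compDirDeriv u Λ = ∑ l, u l • compPDeriv l Λ := by
  simp [compDirDeriv]

theorem compDirDeriv_apply (u : Fin n → ℝ) (Λ : (Fin n →₀ ℕ) →₀ ℝ) (γ : Fin n →₀ ℕ) :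
    compDirDeriv u Λ γ = ∑ l, u l * compPDeriv l Λ γ := by
  simp [compDirDeriv, Finsupp.finsetSum_apply]

theorem dshift_compDirDeriv (u : Fin n → ℝ) (j : Fin n) (Λ : (Fin n →₀ ℕ) →₀ ℝ) :
    dshift j (compDirDeriv u Λ) = compDirDeriv u (dshift j Λ) + u j • Λ := by
  ext β
  have h l := congrArg (· β) (dshift_compPDeriv j l Λ)
  simp only [dshift_apply, Finsupp.add_apply, apply_ite (fun Λ' : (Fin n →₀ ℕ) →₀ ℝ => Λ' β),
    Finsupp.coe_zero, Pi.zero_apply] at h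
  simp [dshift_apply, compDirDeriv_apply, h, mul_add, Finset.sum_add_distrib]

theorem mem_dualSpace {ζ : Fin n → ℝ} {Q : Ideal (MvPolynomial (Fin n) ℝ)}
    {Λ : (Fin n →₀ ℕ) →₀ ℝ} : Λ ∈ dualSpace ζ Q ↔ ∀ p ∈ Q, applyAt ζ Λ p = 0 := by
  simp [dualSpace, Submodule.mem_iInf, applyAt]

theorem dshift_mem_dualSpace {ζ : Fin n → ℝ} {Q : Ideal (MvPolynomial (Fin n) ℝ)}
    {Λ : (Fin n →₀ ℕ) →₀ ℝ} (hΛ : Λ ∈ dualSpace ζ Q) (l : Fin n) :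
    dshift l Λ ∈ dualSpace ζ Q :=
  mem_dualSpace.mpr fun p hp => by
    rw [← applyAt_X_sub_C_mul]
    exact mem_dualSpace.mp hΛ _ (Q.mul_mem_left _ hp)

theorem maxIdealAt_eq_ker (ζ : Fin n → ℝ) : maxIdealAt ζ = RingHom.ker (eval ζ) := by
  refine le_antisymm (Ideal.span_le.mpr ?_) fun p hp => ?_
  · rintro _ ⟨i, rfl⟩
    simp
  · have hsub (q : MvPolynomial (Fin n) ℝ) : q - C (eval ζ q) ∈ maxIdealAt ζ := by
      induction q using MvPolynomial.induction_on with
      | C a => simp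
      | add q q' h h' =>
        rw [map_add, C_add, add_sub_add_comm]
        exact add_mem h h'
      | mul_X q i h =>
        rw [show q * X i - C (eval ζ (q * X i))
            = q * (X i - C (ζ i)) + (q - C (eval ζ q)) * C (ζ i) by simp; ring]
        exact add_mem (Ideal.mul_mem_left _ _ (Ideal.subset_span ⟨i, rfl⟩))
          (Ideal.mul_mem_right _ _ h)
    simpa [RingHom.mem_ker.mp hp] using hsub p

theorem single_zero_one_mem_dualSpace {ζ : Fin n → ℝ} {Q : Ideal (MvPolynomial (Fin n) ℝ)}
    (hQ : Q ≤ maxIdealAt ζ) : single 0 1 ∈ dualSpace ζ Q :=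
  mem_dualSpace.mpr fun p hp => by
    rw [applyAt_single, nderiv_zero_left, one_mul, ← RingHom.mem_ker, ← maxIdealAt_eq_ker]
    exact hQ hp

theorem applyAt_mul_of_forall_dshift_mem {ζ : Fin n → ℝ} {Q : Ideal (MvPolynomial (Fin n) ℝ)}
    {Λ : (Fin n →₀ ℕ) →₀ ℝ} (hΛ : ∀ j, dshift j Λ ∈ dualSpace ζ Q)
    (g : MvPolynomial (Fin n) ℝ) {q : MvPolynomial (Fin n) ℝ} (hq : q ∈ Q) :
    applyAt ζ Λ (g * q) = eval ζ g * applyAt ζ Λ q := by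
  induction g using MvPolynomial.induction_on with
  | C a => rw [applyAt_C_mul, eval_C]
  | add g g' h h' => rw [add_mul, applyAt_add_right, h, h', map_add, add_mul]
  | mul_X g i h =>
    have hsplit : g * X i * q = (X i - C (ζ i)) * (g * q) + C (ζ i) * (g * q) := by ring
    rw [hsplit, applyAt_add_right, applyAt_X_sub_C_mul, applyAt_C_mul, h,
      mem_dualSpace.mp (hΛ i) _ (Q.mul_mem_left g hq), map_mul, eval_X]
    ring

theorem le_of_isPrimaryComponentAt {ζ : Fin n → ℝ} {I Q : Ideal (MvPolynomial (Fin n) ℝ)}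
    (hQ : IsPrimaryComponentAt ζ I Q) : I ≤ Q := by
  obtain ⟨-, -, S, -, rfl⟩ := hQ
  exact inf_le_right

theorem exists_eval_ne_zero_mul_mem {ζ : Fin n → ℝ} {I Q : Ideal (MvPolynomial (Fin n) ℝ)}
    (hQ : IsPrimaryComponentAt ζ I Q) :
    ∃ h : MvPolynomial (Fin n) ℝ, eval ζ h ≠ 0 ∧ ∀ q ∈ Q, h * q ∈ I := by
  obtain ⟨-, -, S, hS, rfl⟩ := hQ
  have hprime : (maxIdealAt ζ).IsPrime := maxIdealAt_eq_ker ζ ▸ RingHom.ker_isPrime _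
  have hnot : ¬ S.inf id ≤ maxIdealAt ζ := fun hle => by
    obtain ⟨P, hP, hPle⟩ := hprime.inf_le'.mp hle
    exact (hS P hP).2 (hprime.radical_le_iff.mpr hPle)
  obtain ⟨h, hmem, hh⟩ := SetLike.not_le_iff_exists.mp hnot
  rw [maxIdealAt_eq_ker, RingHom.mem_ker] at hh
  exact ⟨h, hh, fun q hq => ⟨Ideal.mul_mem_right _ _ hmem, Ideal.mul_mem_left _ _ hq⟩⟩

theorem mem_dualSpace_of_forall_dshift_mem {s : ℕ} {f : Fin s → MvPolynomial (Fin n) ℝ}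
    {ζ : Fin n → ℝ} {Q : Ideal (MvPolynomial (Fin n) ℝ)}
    (hQ : IsPrimaryComponentAt ζ (Ideal.span (Set.range f)) Q) {Λ : (Fin n →₀ ℕ) →₀ ℝ}
    (hΛ : ∀ j, dshift j Λ ∈ dualSpace ζ Q) (hf : ∀ k, applyAt ζ Λ (f k) = 0) :
    Λ ∈ dualSpace ζ Q := by
  have hIQ := le_of_isPrimaryComponentAt hQ
  have hI : ∀ p ∈ Ideal.span (Set.range f), applyAt ζ Λ p = 0 := fun p hp => by
    induction hp using Submodule.span_induction with
    | mem p hp =>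
      obtain ⟨k, rfl⟩ := hp
      exact hf k
    | zero => exact applyAt_zero_right ζ Λ
    | add p q _ _ hp hq => rw [applyAt_add_right, hp, hq, add_zero]
    | smul g p hp h =>
      rw [smul_eq_mul, applyAt_mul_of_forall_dshift_mem hΛ g (hIQ hp), h, mul_zero]
  obtain ⟨h, hh, hhQ⟩ := exists_eval_ne_zero_mul_mem hQ
  refine mem_dualSpace.mpr fun q hq => ?_
  have hhq := hI _ (hhQ q hq)
  rw [applyAt_mul_of_forall_dshift_mem hΛ h hq] at hhq
  exact (mul_eq_zero.mp hhq).resolve_left hh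

theorem multideg_add (α β : Fin n →₀ ℕ) : multideg (α + β) = multideg α + multideg β :=
  Finsupp.sum_add_index' (fun _ => rfl) fun _ _ _ => rfl

theorem multideg_single (l : Fin n) (k : ℕ) : multideg (single l k) = k :=
  Finsupp.sum_single_index rfl

theorem compDirDeriv_mem_dualSpace {s : ℕ} {f : Fin s → MvPolynomial (Fin n) ℝ}
    {ζ : Fin n → ℝ} {Q : Ideal (MvPolynomial (Fin n) ℝ)}
    (hQ : IsPrimaryComponentAt ζ (Ideal.span (Set.range f)) Q) {u : Fin n → ℝ}
    (hu : ∀ Λ ∈ dualSpace ζ Q, ∀ k, applyAt ζ (compDirDeriv u Λ) (f k) = 0)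
    {Λ : (Fin n →₀ ℕ) →₀ ℝ} (hΛ : Λ ∈ dualSpace ζ Q) :
    compDirDeriv u Λ ∈ dualSpace ζ Q := by
  suffices ∀ t, ∀ Λ ∈ dualSpace ζ Q, (∀ α ∈ Λ.support, multideg α < t) →
      compDirDeriv u Λ ∈ dualSpace ζ Q from
    this _ Λ hΛ fun α hα => Nat.lt_succ_of_le (Finset.le_sup (f := multideg) hα)
  intro t
  induction t with
  | zero =>
    intro Λ _ hdeg
    rw [Finsupp.support_eq_empty.mp (Finset.eq_empty_of_forall_notMem fun α hα =>
      Nat.not_lt_zero _ (hdeg α hα)), map_zero]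
    exact zero_mem _
  | succ t ih =>
    intro Λ hΛ hdeg
    refine mem_dualSpace_of_forall_dshift_mem hQ (fun j => ?_) (hu Λ hΛ)
    rw [dshift_compDirDeriv]
    refine add_mem (ih _ (dshift_mem_dualSpace hΛ j) fun β hβ => ?_) (Submodule.smul_mem _ _ hΛ)
    have := hdeg (β + single j 1) <| by
      rw [Finsupp.mem_support_iff, ← dshift_apply]
      exact Finsupp.mem_support_iff.mp hβ
    rw [multideg_add, multideg_single] at this
    omega

theorem compDirDeriv_apply_single_succ (u : Fin n → ℝ) (Λ : (Fin n →₀ ℕ) →₀ ℝ) (l : Fin n)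
    (k : ℕ) : compDirDeriv u Λ (single l (k + 1)) = u l * (k + 1) * Λ (single l k) := by
  rw [compDirDeriv_apply, Finset.sum_eq_single l]
  · rw [compPDeriv_apply, ← Finsupp.single_tsub, Nat.add_sub_cancel, Finsupp.single_eq_same]
    push_cast
    ring
  · intro m _ hml
    rw [compPDeriv_apply, Finsupp.single_eq_of_ne hml]
    simp
  · simp

theorem compDirDeriv_iterate_apply_single (u : Fin n → ℝ) (l : Fin n) (k : ℕ) :
    (compDirDeriv u)^[k] (single 0 1) (single l k) = k.factorial * u l ^ k := by
  induction k with
  | zero => simp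
  | succ k ih =>
    rw [Function.iterate_succ_apply', compDirDeriv_apply_single_succ, ih, Nat.factorial_succ]
    push_cast
    ring

theorem eq_zero_of_forall_compDirDeriv_mem {u : Fin n → ℝ} {D : Submodule ℝ ((Fin n →₀ ℕ) →₀ ℝ)}
    (hδ : single 0 1 ∈ D) (hD : ∀ Λ ∈ D, compDirDeriv u Λ ∈ D) {t : ℕ}
    (ht : D ≤ Finsupp.supported ℝ ℝ {α | multideg α ≤ t}) : u = 0 := by
  have hiter : ∀ k, (compDirDeriv u)^[k] (single 0 1) ∈ D := fun k => by
    induction k with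
    | zero => exact hδ
    | succ k ih => exact Function.iterate_succ_apply' (compDirDeriv u) k _ ▸ hD _ ih
  funext l
  have hvanish := (Finsupp.mem_supported' ℝ _).mp (ht (hiter (t + 1))) (single l (t + 1))
    (show ¬multideg (single l (t + 1)) ≤ t by rw [multideg_single]; omega)
  rw [compDirDeriv_iterate_apply_single] at hvanish
  simpa [Nat.factorial_ne_zero] using hvanish

theorem exists_span_le_supported_multideg_le {ι : Type*} [Fintype ι]
    (Λs : ι → ((Fin n →₀ ℕ) →₀ ℝ)) :
    ∃ t, Submodule.span ℝ (Set.range Λs) ≤ Finsupp.supported ℝ ℝ {α | multideg α ≤ t} := by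
  classical
  refine ⟨Finset.univ.sup fun i => (Λs i).support.sup multideg, Submodule.span_le.mpr ?_⟩
  rintro _ ⟨i, rfl⟩ α hα
  exact (Finset.le_sup hα).trans (Finset.le_sup (f := fun i => (Λs i).support.sup multideg)
    (Finset.mem_univ i))

theorem eq_zero_of_forall_applyAt_compDirDeriv {s : ℕ} {f : Fin s → MvPolynomial (Fin n) ℝ}
    {ζ : Fin n → ℝ} {Q : Ideal (MvPolynomial (Fin n) ℝ)}
    (hQ : IsPrimaryComponentAt ζ (Ideal.span (Set.range f)) Q) {t : ℕ}
    (ht : dualSpace ζ Q ≤ Finsupp.supported ℝ ℝ {α | multideg α ≤ t}) {u : Fin n → ℝ}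
    (hu : ∀ Λ ∈ dualSpace ζ Q, ∀ k, applyAt ζ (compDirDeriv u Λ) (f k) = 0) : u = 0 :=
  eq_zero_of_forall_compDirDeriv_mem
    (single_zero_one_mem_dualSpace (hQ.2.1 ▸ Ideal.le_radical))
    (fun _ hΛ => compDirDeriv_mem_dualSpace hQ hu hΛ) ht

theorem jacRow_dotProduct {s μ : ℕ} (Λs : Fin μ → ((Fin n →₀ ℕ) →₀ ℝ))
    (f : Fin s → MvPolynomial (Fin n) ℝ) (ζ : Fin n → ℝ) (ik : Fin μ × Fin s)
    (u : Fin n → ℝ) :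
    jacRow Λs f ζ ik ⬝ᵥ u = applyAt ζ (compDirDeriv u (Λs ik.1)) (f ik.2) := by
  simp only [dotProduct, jacRow, eval_pderiv_applyPoly, compDirDeriv_eq_sum, applyAt, map_sum,
    map_smul, smul_eq_mul, mul_comm]

theorem span_jacRow_eq_top {s μ : ℕ} {f : Fin s → MvPolynomial (Fin n) ℝ} {ζ : Fin n → ℝ}
    {Q : Ideal (MvPolynomial (Fin n) ℝ)}
    (hQ : IsPrimaryComponentAt ζ (Ideal.span (Set.range f)) Q)
    {Λs : Fin μ → ((Fin n →₀ ℕ) →₀ ℝ)}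
    (hΛsp : Submodule.span ℝ (Set.range Λs) = dualSpace ζ Q) :
    Submodule.span ℝ (Set.range (jacRow Λs f ζ)) = ⊤ := by
  rw [← Submodule.dualAnnihilator_eq_bot_iff, eq_bot_iff]
  intro φ hφ
  set u : Fin n → ℝ := fun l => φ fun j => if l = j then 1 else 0
  have hφu (x : Fin n → ℝ) : φ x = x ⬝ᵥ u := by
    simp [LinearMap.pi_apply_eq_sum_univ φ x, dotProduct, u]
  obtain ⟨t, ht⟩ := exists_span_le_supported_multideg_le Λs
  have hu : u = 0 := by
    refine eq_zero_of_forall_applyAt_compDirDeriv hQ (hΛsp ▸ ht) fun Λ hΛ k => ?_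
    have hker : Submodule.span ℝ (Set.range Λs)
        ≤ LinearMap.ker ((applyAtL ζ (f k)).comp (compDirDeriv u)) := by
      refine Submodule.span_le.mpr ?_
      rintro _ ⟨i, rfl⟩
      change applyAt ζ (compDirDeriv u (Λs (i, k).1)) (f (i, k).2) = 0
      rw [← jacRow_dotProduct, ← hφu]
      exact (Submodule.mem_dualAnnihilator φ).mp hφ _ (Submodule.subset_span ⟨(i, k), rfl⟩)
    exact hker (hΛsp ▸ hΛ)
  ext x
  simp [hφu, hu]

theorem exists_injective_linearIndependent_of_span_eq_top {K ι : Type*} [Field K]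
    {v : ι → Fin n → K} (hv : Submodule.span K (Set.range v) = ⊤) :
    ∃ sel : Fin n → ι, Function.Injective sel ∧ LinearIndependent K (v ∘ sel) := by
  obtain ⟨κ, a, ha, hspan, hli⟩ := exists_linearIndependent' K v
  have : Fintype κ := @Fintype.ofFinite κ hli.finite
  have hcard : Fintype.card κ = n := by
    rw [← finrank_span_eq_card hli, hspan, hv, finrank_top, Module.finrank_fin_fun]
  let e : Fin n ≃ κ := (Fintype.equivFinOfCardEq hcard).symm
  exact ⟨a ∘ e, ha.comp e.injective, hli.comp e e.injective⟩

end Deflation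

open Deflation

theorem stmt13_general {n s μ : ℕ} (f : Fin s → MvPolynomial (Fin n) ℝ) (ζ : Fin n → ℝ)
    (Q : Ideal (MvPolynomial (Fin n) ℝ))
    (hQ : IsPrimaryComponentAt ζ (Ideal.span (Set.range f)) Q)
    (Λs : Fin μ → ((Fin n →₀ ℕ) →₀ ℝ))
    (hΛsp : Submodule.span ℝ (Set.range Λs) = dualSpace ζ Q) :
    (∃ sel : Fin n → Fin μ × Fin s, Function.Injective sel ∧
      LinearIndependent ℝ (fun j : Fin n => jacRow Λs f ζ (sel j))) ∧
    (∀ sel : Fin n → Fin μ × Fin s, Function.Injective sel →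
      LinearIndependent ℝ (fun j : Fin n => jacRow Λs f ζ (sel j)) →
      (∀ j : Fin n,
        MvPolynomial.eval ζ (applyPoly (Λs (sel j).1) (f (sel j).2)) = 0) ∧
      (Matrix.of fun j l : Fin n => jacRow Λs f ζ (sel j) l).det ≠ 0) := by
  refine ⟨exists_injective_linearIndependent_of_span_eq_top (span_jacRow_eq_top hQ hΛsp),
    fun sel _ hrows => ⟨fun j => ?_, ?_⟩⟩
  · have hΛ : Λs (sel j).1 ∈ dualSpace ζ Q := hΛsp ▸ Submodule.subset_span ⟨_, rfl⟩
    have hf : f (sel j).2 ∈ Q := le_of_isPrimaryComponentAt hQ (Ideal.subset_span ⟨_, rfl⟩)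
    rw [eval_applyPoly]
    exact mem_dualSpace.mp hΛ _ hf
  · exact (Matrix.isUnit_iff_isUnit_det _).mp
      (Matrix.linearIndependent_rows_iff_isUnit.mp hrows) |>.ne_zero

/-- Deflation Theorem 1: if `f` has a `μ`-fold isolated zero at
`ζ` and `(Λ₁,…,Λ_μ)` is a basis of `𝒟_ζ`, then there exist `n` index pairs `I`
whose rows of `J_{𝒟f}(ζ)` are linearly independent, and for any such choice
the square `n × n` system `𝒟f^I = (Λ_{i_j}(∂_x)[f_{k_j}])_j` has a simple root
at `ζ`: it vanishes there and its Jacobian determinant is nonzero. -/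
theorem stmt13 {n s μ : ℕ} (f : Fin s → MvPolynomial (Fin n) ℝ) (ζ : Fin n → ℝ)
    (Q : Ideal (MvPolynomial (Fin n) ℝ))
    (hQ : IsPrimaryComponentAt ζ (Ideal.span (Set.range f)) Q)
    (hμ : Module.finrank ℝ (MvPolynomial (Fin n) ℝ ⧸ Q) = μ)
    (Λs : Fin μ → ((Fin n →₀ ℕ) →₀ ℝ))
    (hΛli : LinearIndependent ℝ Λs)
    (hΛsp : Submodule.span ℝ (Set.range Λs) = dualSpace ζ Q) :
    (∃ sel : Fin n → Fin μ × Fin s, Function.Injective sel ∧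
      LinearIndependent ℝ (fun j : Fin n => jacRow Λs f ζ (sel j))) ∧
    (∀ sel : Fin n → Fin μ × Fin s, Function.Injective sel →
      LinearIndependent ℝ (fun j : Fin n => jacRow Λs f ζ (sel j)) →
      (∀ j : Fin n,
        MvPolynomial.eval ζ (applyPoly (Λs (sel j).1) (f (sel j).2)) = 0) ∧
      (Matrix.of fun j l : Fin n => jacRow Λs f ζ (sel j) l).det ≠ 0) :=
  stmt13_general f ζ Q hQ Λs hΛsp
end

section
/- (Deflation Theorem 2.) Let f(x) be an n-variate polynomial system with a μ-fold isolated zero at x = ζ, let B = (b₁,…,b_μ) be a basis of R/Q_ζ with dual basis 𝒟 = (Λ₁,…,Λ_μ) of 𝒟_ζ, Λ₁ = 1, and set g_k(x, ε_k) = f_k(x) + Σ_{i=1}^{μ} ε_{i,k} b_i(x). Let 𝒟g(x, ε) = (Λ_i(∂_x)[g_k])_{i,k} be the resulting system of μ·s polynomials in the n + μ·s variables (x, ε), and let I = {(i₁,k₁),…,(iₙ,kₙ)} index n rows of J_{𝒟f}(ζ) that are linearly independent. Let 𝒟g̃(x, ε̃) be the square (μ·s) × (μ·s) system obtained from 𝒟g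 by setting the n variables ε_{i₁,k₁},…,ε_{iₙ,kₙ} to zero. Then 𝒟g̃ has a regular isolated root at (x, ε̃) = (ζ, 0): it vanishes there and its Jacobian matrix at (ζ, 0) is nonsingular. -/
/-!
At `(ζ, 0)` the deflated system reduces to `Λ_i^ζ[f_k]`, which vanishes because `f_k ∈ Q_ζ` and
`Λ_i ∈ Q_ζ^⊥`. The variables `ε` enter linearly, multiplied by the `b_j`, and duality makes
`Λ_i^ζ[b_j]` the identity matrix; so the Jacobian at `(ζ, 0)` is `(v, w) ↦ J_{𝒟f}(ζ) v + E w`,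
where `E` places the surviving `ε`-coordinates in the rows outside `sel`. In the rows `sel` this
is the invertible `n × n` block of `J_{𝒟f}(ζ)`, in the others it is the identity in `w`; the map is
therefore injective, and bijective because it is square.
-/

open MvPolynomial

section Stmt14

attribute [local instance] Classical.propDecidable

/-- Extend an assignment of the remaining `ε`-variables (those not indexed by
`sel`) to all `ε`-variables, setting the removed ones to `0`. -/
noncomputable def extVars {n μ s : ℕ} (sel : Fin n → Fin μ × Fin s)
    (ε : {jk : Fin μ × Fin s // jk ∉ Set.range sel} → ℝ) :
    Fin μ × Fin s → ℝ :=
  fun jk => if h : jk ∈ Set.range sel then 0 else ε ⟨jk, h⟩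

/-- The square deflated system `𝒟g̃(x, ε̃)`: component `(i,k)` is
`Λ_i(∂_x)[g_k]` where `g_k = f_k + Σ_j ε_{j,k} b_j` and the `n` variables
`ε_{sel 1}, …, ε_{sel n}` are set to `0`. -/
noncomputable def deflSys2 {n μ s : ℕ} (Λs : Fin μ → ((Fin n →₀ ℕ) →₀ ℝ))
    (f : Fin s → MvPolynomial (Fin n) ℝ) (b : Fin μ → MvPolynomial (Fin n) ℝ)
    (sel : Fin n → Fin μ × Fin s)
    (y : (Fin n → ℝ) × ({jk : Fin μ × Fin s // jk ∉ Set.range sel} → ℝ))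
    (ik : Fin μ × Fin s) : ℝ :=
  MvPolynomial.eval y.1 (applyPoly (Λs ik.1) (f ik.2)) +
    ∑ j, extVars sel y.2 (j, ik.2) * MvPolynomial.eval y.1 (applyPoly (Λs ik.1) (b j))

theorem MvPolynomial.hasFDerivAt_eval {𝕜 σ : Type*} [NontriviallyNormedField 𝕜] [Fintype σ]
    [DecidableEq σ] (P : MvPolynomial σ 𝕜) (x : σ → 𝕜) :
    HasFDerivAt (fun y => eval y P)
      (∑ j, eval x (pderiv j P) • ContinuousLinearMap.proj (R := 𝕜) (φ := fun _ => 𝕜) j) x := by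
  induction P using MvPolynomial.induction_on with
  | C a =>
    simp only [eval_C]
    exact (hasFDerivAt_const a x).congr_fderiv (by ext; simp)
  | add p q hp hq =>
    simp only [map_add]
    exact (hp.fun_add hq).congr_fderiv (by ext; simp [add_mul, Finset.sum_add_distrib])
  | mul_X p i hp =>
    simp only [map_mul, eval_X]
    refine (hp.fun_mul (ContinuousLinearMap.proj i).hasFDerivAt).congr_fderiv ?_
    ext v
    simp [Pi.single_apply, apply_ite (eval x), add_mul, ite_mul, Finset.sum_add_distrib,
      Finset.mul_sum, mul_assoc]

theorem eval_applyPoly {n : ℕ} (ζ : Fin n → ℝ) (Λ : (Fin n →₀ ℕ) →₀ ℝ)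
    (g : MvPolynomial (Fin n) ℝ) : eval ζ (applyPoly Λ g) = applyAt ζ Λ g := by
  rw [applyPoly, applyAt, applyAtL, Finsupp.linearCombination_apply, map_finsuppSum]
  exact Finsupp.sum_congr fun α _ => by rw [smul_eval]; rfl

theorem applyAt_eq_zero_of_mem_dualSpace {n : ℕ} {ζ : Fin n → ℝ}
    {Q : Ideal (MvPolynomial (Fin n) ℝ)} {Λ : (Fin n →₀ ℕ) →₀ ℝ} (hΛ : Λ ∈ dualSpace ζ Q)
    {p : MvPolynomial (Fin n) ℝ} (hp : p ∈ Q) : applyAt ζ Λ p = 0 := by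
  simp only [dualSpace, Submodule.mem_iInf, LinearMap.mem_ker] at hΛ
  exact hΛ p hp

theorem IsPrimaryComponentAt.le {n : ℕ} {ζ : Fin n → ℝ} {I Q : Ideal (MvPolynomial (Fin n) ℝ)}
    (h : IsPrimaryComponentAt ζ I Q) : I ≤ Q := by
  obtain ⟨S, -, rfl⟩ := h.2.2
  exact inf_le_right

section ExtVars

variable {n μ s : ℕ} (sel : Fin n → Fin μ × Fin s)

noncomputable def extVarsCLM :
    ({jk : Fin μ × Fin s // jk ∉ Set.range sel} → ℝ) →L[ℝ] (Fin μ × Fin s → ℝ) :=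
  ContinuousLinearMap.pi fun jk =>
    if h : jk ∈ Set.range sel then 0 else ContinuousLinearMap.proj ⟨jk, h⟩

theorem extVarsCLM_apply (ε : {jk : Fin μ × Fin s // jk ∉ Set.range sel} → ℝ) :
    extVarsCLM sel ε = extVars sel ε := by
  ext jk
  by_cases h : jk ∈ Set.range sel
  · simp only [extVarsCLM, extVars, ContinuousLinearMap.pi_apply, dif_pos h]
    rfl
  · simp only [extVarsCLM, extVars, ContinuousLinearMap.pi_apply, dif_neg h,
      ContinuousLinearMap.proj_apply]

theorem extVars_zero : extVars sel 0 = 0 := by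
  rw [← extVarsCLM_apply, map_zero]

open Matrix in
theorem bijective_coprod_extVarsCLM (J : Matrix (Fin μ × Fin s) (Fin n) ℝ)
    (hJ : LinearIndependent ℝ fun j => J (sel j)) :
    Function.Bijective
      ((LinearMap.toContinuousLinearMap (Matrix.mulVecLin J)).coprod (extVarsCLM sel)) := by
  set L := (LinearMap.toContinuousLinearMap (Matrix.mulVecLin J)).coprod (extVarsCLM sel)
  have hL : ∀ v w, L (v, w) = J *ᵥ v + extVars sel w := fun v w => by
    simp [L, extVarsCLM_apply]
  have hinj : Function.Injective L := by
    rw [injective_iff_map_eq_zero]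
    rintro ⟨v, w⟩ h
    rw [hL] at h
    -- the rows `sel` of `L` form the invertible block `J.submatrix sel id` in `v` alone
    obtain rfl : v = 0 := by
      have hunit : IsUnit (J.submatrix sel id) := Matrix.linearIndependent_rows_iff_isUnit.mp hJ
      refine Matrix.mulVec_injective_iff_isUnit.mpr hunit (funext fun m => ?_)
      simpa [extVars, Matrix.mulVec, dotProduct] using congr_fun h (sel m)
    suffices w = 0 by simp [this]
    ext ⟨jk, hjk⟩
    simpa [extVars, hjk] using congr_fun h jk
  have hsel : Function.Injective sel := hJ.injective.of_comp
  have hcard : Fintype.card {jk : Fin μ × Fin s // jk ∉ Set.range sel} = μ * s - n := by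
    rw [Fintype.card_subtype_compl, Set.card_range_of_injective hsel]
    simp
  have hrank : Module.finrank ℝ ((Fin n → ℝ) × ({jk : Fin μ × Fin s // jk ∉ Set.range sel} → ℝ))
      = Module.finrank ℝ (Fin μ × Fin s → ℝ) := by
    have := Fintype.card_le_of_injective sel hsel
    simp only [Module.finrank_prod, Module.finrank_fintype_fun_eq_card, hcard, Fintype.card_fin,
      Fintype.card_prod] at this ⊢
    omega
  exact ⟨hinj, (LinearMap.injective_iff_surjective_of_finrank_eq_finrank hrank
    (f := L.toLinearMap)).mp hinj⟩

end ExtVars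

section DeflatedSystem

variable {n μ s : ℕ} (Λs : Fin μ → ((Fin n →₀ ℕ) →₀ ℝ)) (f : Fin s → MvPolynomial (Fin n) ℝ)
  (b : Fin μ → MvPolynomial (Fin n) ℝ) (sel : Fin n → Fin μ × Fin s)

theorem deflSys2_mk_zero (ζ : Fin n → ℝ) (ik : Fin μ × Fin s) :
    deflSys2 Λs f b sel (ζ, 0) ik = applyAt ζ (Λs ik.1) (f ik.2) := by
  simp [deflSys2, extVars_zero, eval_applyPoly]

theorem hasFDerivAt_deflSys2 {ζ : Fin n → ℝ}
    (hdual : ∀ i j, applyAt ζ (Λs i) (b j) = if i = j then 1 else 0) :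
    HasFDerivAt (fun y ik => deflSys2 Λs f b sel y ik)
      ((LinearMap.toContinuousLinearMap (Matrix.of (jacRow Λs f ζ)).mulVecLin).coprod
        (extVarsCLM sel)) (ζ, 0) := by
  rw [hasFDerivAt_pi']
  intro ik
  have hε (jk : Fin μ × Fin s) : HasFDerivAt (fun y : (Fin n → ℝ) × _ => extVars sel y.2 jk)
      ((ContinuousLinearMap.proj jk).comp ((extVarsCLM sel).comp (ContinuousLinearMap.snd ℝ _ _)))
      (ζ, 0) := by
    convert ContinuousLinearMap.hasFDerivAt _ using 1
    ext y
    simp [extVarsCLM_apply]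
  have hP (P : MvPolynomial (Fin n) ℝ) := (hasFDerivAt_eval P ζ).comp _
    (hasFDerivAt_fst (𝕜 := ℝ) (p := ((ζ, 0) : _ × ({jk // jk ∉ Set.range sel} → ℝ))))
  have hcomp := (hP (applyPoly (Λs ik.1) (f ik.2))).fun_add
    (HasFDerivAt.fun_sum (u := Finset.univ) fun j _ =>
      (hε (j, ik.2)).fun_mul (hP (applyPoly (Λs ik.1) (b j))))
  -- `ε = 0` kills the `x`-derivative of the `ε`-terms, and duality collapses the rest to `ε_{ik}`
  refine hcomp.congr_fderiv (ContinuousLinearMap.ext fun y => ?_)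
  simp [extVars_zero, extVarsCLM_apply, eval_applyPoly, hdual, jacRow, Matrix.mulVec, dotProduct]

end DeflatedSystem

theorem stmt14_general {n s μ : ℕ}
    (f : Fin s → MvPolynomial (Fin n) ℝ) (ζ : Fin n → ℝ)
    (Q : Ideal (MvPolynomial (Fin n) ℝ))
    (hQ : IsPrimaryComponentAt ζ (Ideal.span (Set.range f)) Q)
    (b : Fin μ → MvPolynomial (Fin n) ℝ)
    (Λs : Fin μ → ((Fin n →₀ ℕ) →₀ ℝ))
    (hΛsp : Submodule.span ℝ (Set.range Λs) = dualSpace ζ Q)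
    (hdual : ∀ i j, applyAt ζ (Λs i) (b j) = if i = j then 1 else 0)
    (sel : Fin n → Fin μ × Fin s)
    (hsel : LinearIndependent ℝ (fun j : Fin n => jacRow Λs f ζ (sel j))) :
    (∀ ik : Fin μ × Fin s, deflSys2 Λs f b sel (ζ, 0) ik = 0) ∧
    Function.Bijective
      (fderiv ℝ (fun y => fun ik => deflSys2 Λs f b sel y ik) (ζ, 0)) := by
  refine ⟨fun ik => ?_, ?_⟩
  · have hΛ : Λs ik.1 ∈ dualSpace ζ Q := hΛsp ▸ Submodule.subset_span ⟨ik.1, rfl⟩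
    have hf : f ik.2 ∈ Q := hQ.le (Ideal.subset_span ⟨ik.2, rfl⟩)
    rw [deflSys2_mk_zero, applyAt_eq_zero_of_mem_dualSpace hΛ hf]
  · rw [(hasFDerivAt_deflSys2 Λs f b sel hdual).fderiv]
    exact bijective_coprod_extVarsCLM sel _ hsel

/-- Deflation Theorem 2: with `B = (b₁,…,b_μ)` a basis of
`R/Q_ζ`, `𝒟 = (Λ₁,…,Λ_μ)` its dual basis of `𝒟_ζ` with `Λ₁ = 1`, and `sel`
selecting `n` linearly independent rows of `J_{𝒟f}(ζ)`, the square
`(μ·s) × (μ·s)` system `𝒟g̃(x, ε̃)` obtained from `𝒟g` by setting the `n`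
variables `ε_{sel j}` to zero has a regular isolated root at `(ζ, 0)`: it
vanishes there and its Jacobian (total derivative) there is nonsingular. -/
theorem stmt14 {n s μ : ℕ} (hμpos : 0 < μ)
    (f : Fin s → MvPolynomial (Fin n) ℝ) (ζ : Fin n → ℝ)
    (Q : Ideal (MvPolynomial (Fin n) ℝ))
    (hQ : IsPrimaryComponentAt ζ (Ideal.span (Set.range f)) Q)
    (hμ : Module.finrank ℝ (MvPolynomial (Fin n) ℝ ⧸ Q) = μ)
    (b : Fin μ → MvPolynomial (Fin n) ℝ)
    (hbli : LinearIndependent ℝ (fun j => Ideal.Quotient.mk Q (b j)))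
    (hbsp : Submodule.span ℝ (Set.range fun j => Ideal.Quotient.mk Q (b j)) = ⊤)
    (Λs : Fin μ → ((Fin n →₀ ℕ) →₀ ℝ))
    (hΛli : LinearIndependent ℝ Λs)
    (hΛsp : Submodule.span ℝ (Set.range Λs) = dualSpace ζ Q)
    (hdual : ∀ i j, applyAt ζ (Λs i) (b j) = if i = j then 1 else 0)
    (hΛ1 : Λs ⟨0, hμpos⟩ = Finsupp.single 0 (1 : ℝ))
    (sel : Fin n → Fin μ × Fin s) (hselinj : Function.Injective sel)
    (hsel : LinearIndependent ℝ (fun j : Fin n => jacRow Λs f ζ (sel j))) :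
    (∀ ik : Fin μ × Fin s, deflSys2 Λs f b sel (ζ, 0) ik = 0) ∧
    Function.Bijective
      (fderiv ℝ (fun y => fun ik => deflSys2 Λs f b sel y ik) (ζ, 0)) :=
  stmt14_general f ζ Q hQ b Λs hΛsp hdual sel hsel

end Stmt14
end
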